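/- The subalgebra σ(L^∞_r(ℝⁿ)) of L^∞(ℝⁿ) is self-adjoint: if g = σ(A) for some A ∈ L^∞_r(ℝⁿ), then the complex conjugate of g is also in σ(L^∞_r(ℝⁿ)); indeed conj(g) = σ(FAF) where F is the antiunitary flip Fφ(p) = conj(φ(−p)). -/

import Mathlib

/-!
Because the density `1/E(p)` is even, the flip `F φ = conj ∘ φ ∘ neg` is an antiunitary
involution of `L²_r(ℝⁿ)`. Conjugation by `F` turns the translation `T_a` into `T_{-a}`,
so `F A F` again commutes with all translations. Since `𝓕 (conj ψ) p = conj (𝓕 ψ (-p))`,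
the flip sends `𝓕 ψ` to `𝓕 (conj ψ)`, and therefore `F A F` acts on `𝓕 ψ` as
multiplication by `conj g`.
-/

open MeasureTheory FourierTransform

noncomputable section

/-- The relativistic energy `E(p) = √(|p|² + m²)`. -/
def energy {n : ℕ} (m : ℝ) (p : EuclideanSpace ℝ (Fin n)) : ℝ :=
  Real.sqrt (‖p‖ ^ 2 + m ^ 2)

/-- The measure `dp/E(p)` on `ℝⁿ`, so `L²_r(ℝⁿ) = L²(μᵣ)`. -/
def rMeasure {n : ℕ} (m : ℝ) : Measure (EuclideanSpace ℝ (Fin n)) :=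
  volume.withDensity fun p => ENNReal.ofReal (1 / energy m p)

/-- The relativistic momentum Hilbert space `L²_r(ℝⁿ)`. -/
abbrev L2r (n : ℕ) (m : ℝ) := Lp ℂ 2 (rMeasure (n := n) m)

/-- `T` is (a bounded realization of) the translation `T_a φ(p) = φ(p−a)` on `L²_r(ℝⁿ)`. -/
def IsTransl {n : ℕ} (m : ℝ) (a : EuclideanSpace ℝ (Fin n))
    (T : L2r n m →L[ℂ] L2r n m) : Prop :=
  ∀ φ : L2r n m, (T φ : EuclideanSpace ℝ (Fin n) → ℂ) =ᵐ[rMeasure m] fun p => φ (p - a)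

/-- `L^∞_r(ℝⁿ)`: the commutant of the translations in `B(L²_r(ℝⁿ))`. -/
def Linftyr (n : ℕ) (m : ℝ) : Set (L2r n m →L[ℂ] L2r n m) :=
  {A | ∀ (a : EuclideanSpace ℝ (Fin n)) (T : L2r n m →L[ℂ] L2r n m),
    IsTransl m a T → A.comp T = T.comp A}

/-- `g` is the symbol of `A ∈ B(L²_r(ℝⁿ))`: the restriction of `A` to `L²(ℝⁿ)` acts as
multiplication by `g` in the position (inverse Fourier) picture, i.e. `A ψ̂ = (g·ψ)^`
for ψ in the dense class `L¹ ∩ L²`. -/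
def IsSymbol {n : ℕ} (m : ℝ) (A : L2r n m →L[ℂ] L2r n m)
    (g : EuclideanSpace ℝ (Fin n) → ℂ) : Prop :=
  ∀ ψ : EuclideanSpace ℝ (Fin n) → ℂ, Integrable ψ → MemLp ψ 2 volume →
    ∀ φ : L2r n m, (φ : EuclideanSpace ℝ (Fin n) → ℂ) =ᵐ[volume] 𝓕 ψ →
      (A φ : EuclideanSpace ℝ (Fin n) → ℂ) =ᵐ[volume] 𝓕 fun x => g x * ψ x

open scoped ENNReal ComplexConjugate

theorem MeasureTheory.Measure.IsNegInvariant.withDensity {G : Type*} [MeasurableSpace G]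
    [InvolutiveNeg G] [MeasurableNeg G] {μ : Measure G} [μ.IsNegInvariant] {f : G → ℝ≥0∞}
    (hf : ∀ x, f (-x) = f x) : (μ.withDensity f).IsNegInvariant := by
  refine ⟨Measure.ext fun s hs => ?_⟩
  rw [Measure.neg_def, Measure.map_apply measurable_neg hs,
    withDensity_apply _ (measurable_neg hs), withDensity_apply _ hs]
  simpa only [hf] using (Measure.measurePreserving_neg μ).setLIntegral_comp_preimage_emb
    (MeasurableEquiv.neg G).measurableEmbedding f s

namespace MeasureTheory.Lp

variable {G : Type*} [MeasurableSpace G] [InvolutiveNeg G] [MeasurableNeg G]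
  {μ : Measure G} [μ.IsNegInvariant] {p : ℝ≥0∞} [Fact (1 ≤ p)]

def conjNeg : Lp ℂ p μ →L⋆[ℂ] Lp ℂ p μ :=
  ((starL ℂ : ℂ ≃L⋆[ℂ] ℂ) : ℂ →L⋆[ℂ] ℂ).compLpL p μ |>.comp <|
    compMeasurePreservingₗᵢ ℂ Neg.neg (Measure.measurePreserving_neg μ) |>.toContinuousLinearMap

theorem coeFn_conjNeg (φ : Lp ℂ p μ) : conjNeg φ =ᵐ[μ] fun x => conj (φ (-x)) := by
  filter_upwards [ContinuousLinearMap.coeFn_compLpL ((starL ℂ : ℂ ≃L⋆[ℂ] ℂ) : ℂ →L⋆[ℂ] ℂ)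
    (compMeasurePreserving Neg.neg (Measure.measurePreserving_neg μ) φ),
    coeFn_compMeasurePreserving φ (Measure.measurePreserving_neg μ)] with x hx hx'
  exact hx.trans (congrArg conj hx')

theorem conjNeg_conjNeg (φ : Lp ℂ p μ) : conjNeg (conjNeg φ) = φ := by
  ext1
  filter_upwards [coeFn_conjNeg (conjNeg φ),
    (Measure.measurePreserving_neg μ).quasiMeasurePreserving.ae_eq_comp (coeFn_conjNeg φ)]
    with x hx hx'
  simp only [Function.comp_apply] at hx'
  simp [hx, hx']

end MeasureTheory.Lp

theorem commute_conj_of_commute_conj {R H : Type*} [CommSemiring R] [StarRing R]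
    [TopologicalSpace H] [AddCommMonoid H] [Module R H] {F : H →L⋆[R] H}
    (hF : Function.Involutive F) {A T : H →L[R] H} (h : Commute A (F.comp (T.comp F))) :
    Commute (F.comp (A.comp F)) T := by
  ext x
  simpa [show ∀ y, F (F y) = y from hF] using congrArg F (DFunLike.congr_fun h (F x))

theorem Real.fourier_conj {V : Type*} [NormedAddCommGroup V] [InnerProductSpace ℝ V]
    [MeasurableSpace V] [BorelSpace V] [FiniteDimensional ℝ V] (f : V → ℂ) (w : V) :
    𝓕 (fun x => conj (f x)) w = conj (𝓕 f (-w)) := by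
  rw [Real.fourier_eq, Real.fourier_eq, ← integral_conj]
  congr 1
  funext v
  simp only [Circle.smul_def, map_mul, inner_neg_right, neg_neg,
    Real.fourierChar_apply, smul_eq_mul]
  congr 1
  rw [← Complex.exp_conj]
  congr 1
  simp only [map_mul, Complex.conj_ofReal, Complex.conj_I]
  push_cast
  ring

section Relativistic

variable {n : ℕ} {m : ℝ}

instance (m : ℝ) : (rMeasure (n := n) m).IsNegInvariant :=
  Measure.IsNegInvariant.withDensity fun p => by simp [energy]

theorem rMeasure_absolutelyContinuous : rMeasure (n := n) m ≪ volume :=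
  withDensity_absolutelyContinuous _ _

theorem volume_absolutelyContinuous_rMeasure (hm : m ≠ 0) :
    (volume : Measure (EuclideanSpace ℝ (Fin n))) ≪ rMeasure m := by
  have henergy : Continuous fun p : EuclideanSpace ℝ (Fin n) => energy m p := by
    unfold energy; fun_prop
  refine withDensity_absolutelyContinuous'
    (measurable_const.div henergy.measurable).ennreal_ofReal.aemeasurable
    (Filter.Eventually.of_forall fun p => ?_)
  have : 0 < energy m p := Real.sqrt_pos.2 (by positivity)
  simpa using this

theorem IsTransl.conjNeg (hm : m ≠ 0) {a : EuclideanSpace ℝ (Fin n)}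
    {T : L2r n m →L[ℂ] L2r n m} (hT : IsTransl m a T) :
    IsTransl m (-a) (Lp.conjNeg.comp (T.comp Lp.conjNeg)) := by
  intro φ
  have hshift : Measure.QuasiMeasurePreserving (fun p => -p - a) (rMeasure m) (rMeasure m) :=
    ((measurePreserving_sub_right volume a).comp
      (Measure.measurePreserving_neg volume)).quasiMeasurePreserving.mono
      rMeasure_absolutelyContinuous (volume_absolutelyContinuous_rMeasure hm)
  filter_upwards [Lp.coeFn_conjNeg (T (Lp.conjNeg φ)),
    (Measure.measurePreserving_neg _).quasiMeasurePreserving.ae_eq_comp (hT (Lp.conjNeg φ)),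
    hshift.ae_eq_comp (Lp.coeFn_conjNeg φ)] with p hflip hT' hflip'
  simp only [Function.comp_apply] at hT' hflip'
  simp [hflip, hT', hflip', add_comm]

theorem conjNeg_ae_eq_fourier_conj (hm : m ≠ 0) {φ : L2r n m}
    {ψ : EuclideanSpace ℝ (Fin n) → ℂ} (h : φ =ᵐ[volume] 𝓕 ψ) :
    Lp.conjNeg φ =ᵐ[volume] 𝓕 fun x => conj (ψ x) := by
  filter_upwards [(Lp.coeFn_conjNeg φ).filter_mono (volume_absolutelyContinuous_rMeasure hm).ae_le,
    (Measure.measurePreserving_neg volume).quasiMeasurePreserving.ae_eq_comp h] with p hp hneg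
  rw [hp, Real.fourier_conj]
  exact congrArg conj hneg

theorem IsSymbol.conjNeg (hm : m ≠ 0) {A : L2r n m →L[ℂ] L2r n m}
    {g : EuclideanSpace ℝ (Fin n) → ℂ} (h : IsSymbol m A g) :
    IsSymbol m (Lp.conjNeg.comp (A.comp Lp.conjNeg)) fun x => conj (g x) := by
  intro ψ hψ₁ hψ₂ φ hφ
  have hA := h _ ((Complex.conjCLE : ℂ →L[ℝ] ℂ).integrable_comp hψ₁) hψ₂.star
    (Lp.conjNeg φ) (conjNeg_ae_eq_fourier_conj hm hφ)
  refine (conjNeg_ae_eq_fourier_conj hm hA).trans (Filter.EventuallyEq.of_eq ?_)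
  simp [mul_comm]

end Relativistic

theorem symbol_image_selfadjoint_general {n : ℕ} (m : ℝ) (hm : 0 < m)
    (A : L2r n m →L[ℂ] L2r n m) (hA : A ∈ Linftyr n m)
    (g : EuclideanSpace ℝ (Fin n) → ℂ)
    (hsym : IsSymbol m A g) :
    ∃ B : L2r n m →L[ℂ] L2r n m, B ∈ Linftyr n m ∧
      IsSymbol m B (fun x => (starRingEnd ℂ) (g x)) ∧
      ∀ φ ψ : L2r n m,
        ((ψ : EuclideanSpace ℝ (Fin n) → ℂ) =ᵐ[rMeasure m]
          fun p => (starRingEnd ℂ) (φ (-p))) →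
        ((B φ : EuclideanSpace ℝ (Fin n) → ℂ) =ᵐ[rMeasure m]
          fun p => (starRingEnd ℂ) ((A ψ) (-p))) := by
  refine ⟨Lp.conjNeg.comp (A.comp Lp.conjNeg), ?_, hsym.conjNeg hm.ne', ?_⟩
  · intro a T hT
    exact commute_conj_of_commute_conj Lp.conjNeg_conjNeg (hA (-a) _ (hT.conjNeg hm.ne'))
  · intro φ ψ hψ
    obtain rfl : ψ = Lp.conjNeg φ := Lp.ext (hψ.trans (Lp.coeFn_conjNeg φ).symm)
    exact Lp.coeFn_conjNeg _

/-- the image of the symbol map is self-adjoint: if `A ∈ L^∞_r(ℝⁿ)` has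
symbol `g ∈ L^∞(ℝⁿ)`, then some `B ∈ L^∞_r(ℝⁿ)` has symbol `conj g`; indeed `B = FAF`
where `F` is the antiunitary flip `Fφ(p) = conj (φ(−p))`. -/
theorem symbol_image_selfadjoint {n : ℕ} (m : ℝ) (hm : 0 < m)
    (A : L2r n m →L[ℂ] L2r n m) (hA : A ∈ Linftyr n m)
    (g : EuclideanSpace ℝ (Fin n) → ℂ) (hg : MemLp g ⊤ volume)
    (hsym : IsSymbol m A g) :
    ∃ B : L2r n m →L[ℂ] L2r n m, B ∈ Linftyr n m ∧
      IsSymbol m B (fun x => (starRingEnd ℂ) (g x)) ∧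
      ∀ φ ψ : L2r n m,
        ((ψ : EuclideanSpace ℝ (Fin n) → ℂ) =ᵐ[rMeasure m]
          fun p => (starRingEnd ℂ) (φ (-p))) →
        ((B φ : EuclideanSpace ℝ (Fin n) → ℂ) =ᵐ[rMeasure m]
          fun p => (starRingEnd ℂ) ((A ψ) (-p))) :=
  symbol_image_selfadjoint_general m hm A hA g hsym
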